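/- arXiv:2311.08660 — 7 statements merged into one kernel-verified Lean document; each statement's English description precedes it below -/
import Mathlib

section
/- Let K be a field and let V₁, …, Vₙ be finitely many pairwise distinct discrete valuation rings contained in K, each with fraction field K. Then the intersection O = V₁ ∩ … ∩ Vₙ is a semilocal Dedekind domain (a Dedekind domain with finitely many maximal ideals) with fraction field K. -/
/-!
Each `Vᵢ` is the ring of integers of its normalized valuation `vᵢ : K → ℤᵐ⁰`. As `ℤ` is
archimedean, a valuation ring of `K` properly containing `Vᵢ` is `K` itself, so distinct `Vᵢ`
are incomparable and the approximation theorem holds for the `vᵢ`: any values `vᵢ(aᵢ)` are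
attained by a single element of `K`. This gives every `z ∈ K` a denominator in `O = ⋂ Vᵢ`, and
shows that a nonzero ideal `I` of `O` is generated by the `y` with `vᵢ(y) = max_{0 ≠ x ∈ I} vᵢ(x)`
for all `i`: the colon ideal `(I : y)` lies in no `𝔪ᵢ ∩ O`, where `𝔪ᵢ` is the maximal ideal of
`Vᵢ`, and by prime avoidance every proper ideal of `O` lies in one of them, because an element of
`O` that is a unit in every `Vᵢ` is a unit in `O`.
-/

open Filter
open scoped WithZero

namespace Subring

variable {K : Type*} [Field K]

lemma inv_mem_of_isUnit {A : Subring K} {x : A} (hx : IsUnit x) : (x : K)⁻¹ ∈ A := by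
  obtain ⟨u, rfl⟩ := hx
  have h : ((u : A) : K) * ((u⁻¹ : Aˣ) : A) = 1 := by
    exact_mod_cast congrArg ((↑) : A → K) u.mul_inv
  rw [inv_eq_of_mul_eq_one_right h]
  exact SetLike.coe_mem _

variable {ι : Type*} [Nonempty ι] {A : ι → Subring K}

lemma isUnit_of_forall_isUnit_inclusion {x : ↥(⨅ i, A i)}
    (h : ∀ i, IsUnit (inclusion (iInf_le A i) x)) : IsUnit x := by
  obtain ⟨i⟩ := ‹Nonempty ι›
  have hx : (x : K) ≠ 0 := fun h0 ↦
    not_isUnit_zero ((show inclusion (iInf_le A i) x = 0 from Subtype.ext h0) ▸ h i)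
  have hinv : (x : K)⁻¹ ∈ ⨅ i, A i := mem_iInf.2 fun i ↦ inv_mem_of_isUnit (h i)
  exact IsUnit.of_mul_eq_one ⟨_, hinv⟩ (Subtype.ext (mul_inv_cancel₀ hx))

variable [Finite ι] [∀ i, IsLocalRing (A i)]

theorem exists_le_comap_maximalIdeal_of_ne_top {J : Ideal ↥(⨅ i, A i)} (hJ : J ≠ ⊤) :
    ∃ i, J ≤ (IsLocalRing.maximalIdeal (A i)).comap (inclusion (iInf_le A i)) := by
  have := Fintype.ofFinite ι
  obtain ⟨i₀⟩ := ‹Nonempty ι›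
  have hcover : (J : Set ↥(⨅ i, A i)) ⊆
      ⋃ i ∈ (Finset.univ : Finset ι),
        ((IsLocalRing.maximalIdeal (A i)).comap (inclusion (iInf_le A i)) : Set _) := by
    intro x hx
    by_contra hnot
    simp only [Set.mem_iUnion, Finset.mem_univ, exists_true_left, SetLike.mem_coe,
      Ideal.mem_comap, IsLocalRing.mem_maximalIdeal, mem_nonunits_iff, not_exists,
      not_not] at hnot
    exact hJ (Ideal.eq_top_of_isUnit_mem J hx (isUnit_of_forall_isUnit_inclusion hnot))
  simpa using (Ideal.subset_union_prime i₀ i₀ fun i _ _ _ ↦ inferInstance).1 hcover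

theorem setOf_isMaximal_iInf_finite : {I : Ideal ↥(⨅ i, A i) | I.IsMaximal}.Finite := by
  refine (Set.finite_range
    fun i ↦ (IsLocalRing.maximalIdeal (A i)).comap (inclusion (iInf_le A i))).subset ?_
  intro J hJ
  obtain ⟨i, hi⟩ := exists_le_comap_maximalIdeal_of_ne_top (Ideal.IsMaximal.ne_top hJ)
  exact ⟨i, (hJ.eq_of_le (Ideal.comap_ne_top _
    (IsLocalRing.maximalIdeal.isMaximal _).ne_top) hi).symm⟩

end Subring

lemma eventually_mul_pow_lt {Γ₀ : Type*} [LinearOrderedCommGroupWithZero Γ₀] [MulArchimedean Γ₀]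
    {γ : Γ₀} (hγ : γ < 1) (c : Γ₀) {δ : Γ₀} (hδ : δ ≠ 0) : ∀ᶠ m in atTop, c * γ ^ m < δ := by
  rcases eq_or_ne c 0 with rfl | hc
  · exact .of_forall fun _ ↦ by simpa [zero_lt_iff] using hδ
  obtain ⟨n, hn⟩ := exists_pow_lt₀ hγ (Units.mk0 (δ / c) (div_ne_zero hδ hc))
  filter_upwards [eventually_ge_atTop n] with m hm
  calc c * γ ^ m ≤ c * γ ^ n := mul_le_mul_right (pow_le_pow_right_of_le_one' hγ.le hm) c
    _ < c * (δ / c) := mul_lt_mul_of_pos_left hn (zero_lt_iff.2 hc)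
    _ = δ := mul_div_cancel₀ δ hc

namespace Valuation

variable {K Γ₀ : Type*} [Field K] [LinearOrderedCommGroupWithZero Γ₀]

section Single

variable (v : Valuation K Γ₀)

lemma map_div_one_add_of_lt_one {y : K} (hy : v y < 1) : v (y / (1 + y)) = v y := by
  rw [map_div₀, v.map_one_add_of_lt hy, div_one]

lemma map_one_add_of_one_lt {y : K} (hy : 1 < v y) : v (1 + y) = v y :=
  v.map_add_eq_of_lt_right (by rwa [v.map_one])

lemma map_div_one_add_of_one_lt {y : K} (hy : 1 < v y) : v (y / (1 + y)) = 1 := by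
  rw [map_div₀, v.map_one_add_of_one_lt hy, div_self (zero_lt_one.trans hy).ne']

lemma map_div_one_add_sub_one_of_one_lt {y : K} (hy : 1 < v y) :
    v (y / (1 + y) - 1) = (v y)⁻¹ := by
  have h : 1 + y ≠ 0 := by
    rw [← v.ne_zero_iff, v.map_one_add_of_one_lt hy]
    exact (zero_lt_one.trans hy).ne'
  rw [show y / (1 + y) - 1 = -(1 + y)⁻¹ by field_simp; ring, v.map_neg, map_inv₀,
    v.map_one_add_of_one_lt hy]

end Single

section Approximation

variable [MulArchimedean Γ₀]

lemma exists_le_one_one_lt_of_integer_ne {v w : Valuation K Γ₀} [w.IsNontrivial]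
    (h : v.integer ≠ w.integer) : ∃ x, v x ≤ 1 ∧ 1 < w x := by
  by_contra! hle
  obtain ⟨y, hy⟩ := IsNontrivial.exists_one_lt (v := w)
  refine h (le_antisymm hle fun x hwx ↦ ?_)
  by_contra hvx
  replace hvx : 1 < v x := not_le.mp hvx
  have hx : x ≠ 0 := v.ne_zero_iff.mp (zero_lt_one.trans hvx).ne'
  -- For large `m`, `v (y * x⁻¹ ^ m) ≤ 1`, hence `w (y * x⁻¹ ^ m) ≤ 1` and `w y ≤ w x ^ m ≤ 1`.
  obtain ⟨m, hm⟩ := (eventually_mul_pow_lt (inv_lt_one_of_one_lt₀ hvx) (v y) one_ne_zero).exists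
  have hym : w (y * x⁻¹ ^ m) ≤ 1 := hle _ (by simpa using hm.le)
  have : w y ≤ 1 := calc
    w y = w (y * x⁻¹ ^ m) * w x ^ m := by
      rw [← map_pow, ← map_mul, mul_assoc, ← mul_pow, inv_mul_cancel₀ hx, one_pow, mul_one]
    _ ≤ 1 := mul_le_one' hym (pow_le_one' hwx m)
  exact hy.not_ge this

lemma exists_one_lt_lt_one_of_integer_ne {v w : Valuation K Γ₀} [v.IsNontrivial]
    [w.IsNontrivial] (h : v.integer ≠ w.integer) : ∃ x, 1 < v x ∧ w x < 1 := by
  obtain ⟨a, hwa, hva⟩ := exists_le_one_one_lt_of_integer_ne h.symm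
  obtain ⟨b, hvb, hwb⟩ := exists_le_one_one_lt_of_integer_ne h
  have hb : b ≠ 0 := w.ne_zero_iff.mp (zero_lt_one.trans hwb).ne'
  refine ⟨a / b, ?_, ?_⟩
  · rw [map_div₀, one_lt_div₀ ((v.pos_iff).2 hb)]
    exact hvb.trans_lt hva
  · rw [map_div₀, div_lt_one₀ ((w.pos_iff).2 hb)]
    exact hwa.trans_lt hwb

variable {ι : Type*} {v : ι → Valuation K Γ₀} [∀ i, (v i).IsNontrivial]
  (hinj : Function.Injective fun i ↦ (v i).integer)
include hinj

lemma exists_one_lt_forall_mem_lt_one (i : ι) (s : Finset ι) (hi : i ∉ s) :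
    ∃ x, 1 < v i x ∧ ∀ j ∈ s, v j x < 1 := by
  classical
  induction s using Finset.induction_on with
  | empty => simpa using IsNontrivial.exists_one_lt (v := v i)
  | @insert j s hjs ih =>
    obtain ⟨y, hiy, hsy⟩ := ih (fun h ↦ hi (Finset.mem_insert_of_mem h))
    obtain ⟨z, hiz, hjz⟩ := exists_one_lt_lt_one_of_integer_ne (v := v i) (w := v j)
      (hinj.ne fun h ↦ hi (h ▸ Finset.mem_insert_self j s))
    obtain ⟨m, hm, hsm⟩ : ∃ m, m ≠ 0 ∧ ∀ t ∈ s, v t z * v t y ^ m < 1 :=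
      ((eventually_ne_atTop 0).and <| (eventually_all_finset s).2
        fun t ht ↦ eventually_mul_pow_lt (hsy t ht) _ one_ne_zero).exists
    simp only [Finset.mem_insert, forall_eq_or_imp]
    rcases le_or_gt (v j y) 1 with hjy | hjy
    · refine ⟨z * y ^ m, ?_, ?_, fun t ht ↦ ?_⟩ <;> simp only [map_mul, map_pow]
      · exact one_lt_mul_of_lt_of_le' hiz (one_le_pow₀ hiy.le)
      · exact mul_lt_one_of_lt_of_le hjz (pow_le_one' hjy m)
      · exact hsm t ht
    · refine ⟨z * (y ^ m / (1 + y ^ m)), ?_, ?_, fun t ht ↦ ?_⟩ <;> rw [map_mul]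
      · rwa [map_div_one_add_of_one_lt _ (by rw [map_pow]; exact one_lt_pow₀ hiy hm), mul_one]
      · rwa [map_div_one_add_of_one_lt _ (by rw [map_pow]; exact one_lt_pow₀ hjy hm), mul_one]
      · rw [map_div_one_add_of_lt_one _
          (by rw [map_pow]; exact pow_lt_one₀ zero_le (hsy t ht) hm), map_pow]
        exact hsm t ht

variable [Finite ι]

lemma exists_map_sub_lt_forall_ne_map_lt (i : ι) (b : K) {γ : ι → Γ₀} (hγ : ∀ j, γ j ≠ 0) :
    ∃ y, v i (y - b) < γ i ∧ ∀ j ≠ i, v j y < γ j := by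
  classical
  have := Fintype.ofFinite ι
  obtain ⟨x, hix, hjx⟩ :=
    exists_one_lt_forall_mem_lt_one hinj i _ (Finset.notMem_erase i .univ)
  replace hjx : ∀ j ≠ i, v j x < 1 := fun j hj ↦ hjx j (by simp [hj])
  -- `b * x ^ m / (1 + x ^ m)` tends to `b` at `v i` and to `0` at every other `v j`.
  obtain ⟨m, ⟨hm, him⟩, hjm⟩ : ∃ m, (m ≠ 0 ∧ v i b * (v i x)⁻¹ ^ m < γ i) ∧
      ∀ j, j ≠ i → v j b * v j x ^ m < γ j :=
    (((eventually_ne_atTop 0).and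
      (eventually_mul_pow_lt (inv_lt_one_of_one_lt₀ hix) _ (hγ i))).and
      (eventually_all.2 fun j ↦ eventually_imp_distrib_left.2
        fun hj ↦ eventually_mul_pow_lt (hjx j hj) _ (hγ j))).exists
  refine ⟨b * (x ^ m / (1 + x ^ m)), ?_, fun j hj ↦ ?_⟩
  · rw [← mul_sub_one, map_mul, map_div_one_add_sub_one_of_one_lt _
      (by rw [map_pow]; exact one_lt_pow₀ hix hm), map_pow, ← inv_pow]
    exact him
  · rw [map_mul, map_div_one_add_of_lt_one _
      (by rw [map_pow]; exact pow_lt_one₀ zero_le (hjx j hj) hm), map_pow]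
    exact hjm j hj

theorem exists_forall_map_sub_lt (a : ι → K) {γ : ι → Γ₀} (hγ : ∀ i, γ i ≠ 0) :
    ∃ x, ∀ i, v i (x - a i) < γ i := by
  classical
  have := Fintype.ofFinite ι
  choose y hyi hyj using fun j ↦ exists_map_sub_lt_forall_ne_map_lt hinj j (a j) hγ
  refine ⟨∑ j, y j, fun i ↦ ?_⟩
  rw [← Finset.add_sum_erase _ _ (Finset.mem_univ i), add_sub_right_comm]
  exact (v i).map_add_lt (hyi i) <| (v i).map_sum_lt (hγ i)
    fun j hj ↦ hyj j i (Finset.ne_of_mem_erase hj).symm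

theorem exists_ne_zero_forall_map_eq [Nonempty ι] {a : ι → K} (ha : ∀ i, a i ≠ 0) :
    ∃ x ≠ 0, ∀ i, v i x = v i (a i) := by
  obtain ⟨x, hx⟩ := exists_forall_map_sub_lt hinj a fun i ↦ (v i).ne_zero_iff.2 (ha i)
  have hxa : ∀ i, v i x = v i (a i) := fun i ↦ (v i).map_eq_of_sub_lt (hx i)
  refine ⟨x, fun h ↦ ?_, hxa⟩
  obtain ⟨i⟩ := ‹Nonempty ι›
  exact (v i).ne_zero_iff.2 (ha i) (by rw [← hxa i, h, map_zero])

end Approximation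

variable {ι : Type*} {v : ι → Valuation K Γ₀}

lemma mem_iInf_integer {x : K} : x ∈ ⨅ i, (v i).integer ↔ ∀ i, v i x ≤ 1 :=
  Subring.mem_iInf

lemma eq_top_of_forall_exists_map_eq_one [Finite ι] [Nonempty ι]
    {J : Ideal ↥(⨅ i, (v i).integer)} (h : ∀ i, ∃ x ∈ J, v i x = 1) : J = ⊤ := by
  by_contra hJ
  obtain ⟨i, hi⟩ := Subring.exists_le_comap_maximalIdeal_of_ne_top hJ
  obtain ⟨x, hxJ, hx⟩ := h i
  have := hi hxJ
  rw [Ideal.mem_comap, IsLocalRing.mem_maximalIdeal, mem_nonunits_iff,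
    Integer.not_isUnit_iff_valuation_lt_one] at this
  exact this.ne hx

theorem isFractionRing_iInf_integer [MulArchimedean Γ₀] [Finite ι] [Nonempty ι]
    [∀ i, (v i).IsNontrivial] (hinj : Function.Injective fun i ↦ (v i).integer) :
    IsFractionRing ↥(⨅ i, (v i).integer) K := by
  refine IsFractionRing.of_field _ K fun z ↦ ?_
  -- a common denominator `b` of `z`: `v i b = min 1 (v i z)⁻¹` for every `i`
  have ha : ∀ i, (if v i z ≤ 1 then (1 : K) else z⁻¹) ≠ 0 := fun i ↦ by
    split_ifs with h
    · exact one_ne_zero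
    · exact inv_ne_zero ((v i).ne_zero_iff.1 (zero_lt_one.trans (not_le.1 h)).ne')
  obtain ⟨b, hb0, hb⟩ := exists_ne_zero_forall_map_eq hinj ha
  have hbO : b ∈ ⨅ i, (v i).integer := mem_iInf_integer.2 fun i ↦ by
    rw [hb i]
    split_ifs with h
    · exact (v i).map_one.le
    · rw [map_inv₀]
      exact inv_le_one_of_one_le₀ (not_le.1 h).le
  have hzbO : z * b ∈ ⨅ i, (v i).integer := mem_iInf_integer.2 fun i ↦ by
    rw [map_mul, hb i]
    split_ifs with h
    · rwa [(v i).map_one, mul_one]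
    · rw [map_inv₀, mul_inv_cancel₀ (zero_lt_one.trans (not_le.1 h)).ne']
  exact ⟨⟨z * b, hzbO⟩, ⟨b, hbO⟩, (mul_div_cancel_right₀ z hb0).symm⟩

section Discrete

variable {v : ι → Valuation K ℤᵐ⁰}

lemma exists_mem_ne_zero_forall_map_le {I : Ideal ↥(⨅ i, (v i).integer)} (hI : I ≠ ⊥) (i : ι) :
    ∃ a ∈ I, a ≠ 0 ∧ ∀ x ∈ I, v i x ≤ v i a := by
  obtain ⟨x₀, hx₀I, hx₀⟩ := Submodule.exists_mem_ne_zero_of_ne_bot hI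
  have hne : ∀ x : ↥(⨅ i, (v i).integer), x ≠ 0 → v i x ≠ 0 := fun x hx ↦
    (v i).ne_zero_iff.2 fun h ↦ hx (Subtype.ext h)
  obtain ⟨_, ⟨a, haI, ha0, rfl⟩, hmax⟩ := Int.exists_greatest_of_bdd
    (P := fun k ↦ ∃ x ∈ I, x ≠ 0 ∧ WithZero.log (v i x) = k)
    ⟨0, by
      rintro _ ⟨x, -, hx, rfl⟩
      rw [← WithZero.log_one, WithZero.log_le_log (hne x hx) one_ne_zero]
      exact mem_iInf_integer.1 x.2 i⟩
    ⟨_, x₀, hx₀I, hx₀, rfl⟩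
  refine ⟨a, haI, ha0, fun x hxI ↦ ?_⟩
  rcases eq_or_ne x 0 with rfl | hx
  · simp
  · exact (WithZero.log_le_log (hne x hx) (hne a ha0)).1 (hmax _ ⟨x, hxI, hx, rfl⟩)

theorem isPrincipalIdealRing_iInf_integer [Finite ι] [Nonempty ι] [∀ i, (v i).IsNontrivial]
    (hinj : Function.Injective fun i ↦ (v i).integer) :
    IsPrincipalIdealRing ↥(⨅ i, (v i).integer) := by
  refine ⟨fun I ↦ ?_⟩
  rcases eq_or_ne I ⊥ with rfl | hI
  · exact bot_isPrincipal
  choose a haI ha0 hmax using exists_mem_ne_zero_forall_map_le hI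
  obtain ⟨y, hy0, hy⟩ := exists_ne_zero_forall_map_eq hinj (a := fun i ↦ (a i : K))
    fun i h ↦ ha0 i (Subtype.ext h)
  have hdiv : ∀ x ∈ I, (x : K) / y ∈ ⨅ i, (v i).integer := fun x hx ↦
    mem_iInf_integer.2 fun i ↦ by
      rw [map_div₀, hy i]
      exact div_le_one_of_le₀ (hmax i x hx) zero_le
  have hyO : y ∈ ⨅ i, (v i).integer :=
    mem_iInf_integer.2 fun i ↦ (hy i).trans_le (mem_iInf_integer.1 (a i).2 i)
  refine ⟨⟨⟨y, hyO⟩, le_antisymm (fun x hx ↦ Ideal.mem_span_singleton'.2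
    ⟨⟨_, hdiv x hx⟩, Subtype.ext (div_mul_cancel₀ _ hy0)⟩) ?_⟩⟩
  -- `y ∈ I`: the ideal `I : y` contains each `a i / y`, a unit at `v i`, so it is everything.
  have hcolon : I.colon {⟨y, hyO⟩} = ⊤ := eq_top_of_forall_exists_map_eq_one fun i ↦
    ⟨⟨_, hdiv _ (haI i)⟩,
      Submodule.mem_colon_singleton.2 <| by
        convert haI i
        exact Subtype.ext (div_mul_cancel₀ _ hy0),
      by simp [map_div₀, hy i, (v i).ne_zero_iff.2 fun h ↦ ha0 i (Subtype.ext h)]⟩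
  have := Submodule.mem_colon_singleton.1 (hcolon ▸ Submodule.mem_top (x := 1))
  rwa [one_smul, ← Ideal.span_singleton_le_iff_mem] at this

end Discrete

end Valuation

lemma IsDiscreteValuationRing.integer_valuation_maximalIdeal {K : Type*} [Field K]
    (V : Subring K) [IsDiscreteValuationRing V] [IsFractionRing V K] :
    ((IsDiscreteValuationRing.maximalIdeal V).valuation K).integer = V :=
  map_algebraMap_eq_valuationSubring.symm.trans <|
    (RingHom.range_eq_map _).symm.trans V.range_subtype

/-- An intersection of finitely many pairwise distinct discrete valuation rings inside a
field `K`, each with fraction field `K`, is a semilocal Dedekind domain with fraction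
field `K`. -/
theorem stmt_0 {K : Type*} [Field K] {n : ℕ} (hn : 0 < n) (V : Fin n → Subring K)
    (hDVR : ∀ i, IsDiscreteValuationRing (V i))
    (hfrac : ∀ i, IsFractionRing (V i) K)
    (hdist : Function.Injective V) :
    IsDedekindDomain ↥(⨅ i, V i) ∧
      {I : Ideal ↥(⨅ i, V i) | I.IsMaximal}.Finite ∧
      IsFractionRing ↥(⨅ i, V i) K := by
  have : Nonempty (Fin n) := ⟨⟨0, hn⟩⟩
  let v i : Valuation K ℤᵐ⁰ := (IsDiscreteValuationRing.maximalIdeal (V i)).valuation K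
  have : ∀ i, (v i).IsNontrivial := fun i ↦ inferInstance
  have hvV : (fun i ↦ (v i).integer) = V :=
    funext fun i ↦ IsDiscreteValuationRing.integer_valuation_maximalIdeal (V i)
  have hinj : Function.Injective fun i ↦ (v i).integer := hvV ▸ hdist
  have := Valuation.isPrincipalIdealRing_iInf_integer hinj
  rw [← hvV]
  exact ⟨inferInstance, Subring.setOf_isMaximal_iInf_finite,
    Valuation.isFractionRing_iInf_integer hinj⟩
end

section
/- Let A be a semilocal commutative ring and let (a, b) ∈ A² be a unimodular row, i.e., aA + bA = A. Then there exist c, d ∈ A such that the matrix with rows (a, b) and (c, d) is invertible, i.e., ad − bc is a unit of A. -/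
/-- Over a semilocal ring, a unimodular row `(a, b)` extends to an invertible `2 × 2` matrix. -/
theorem stmt_9 {A : Type*} [CommRing A]
    (hsemilocal : {I : Ideal A | I.IsMaximal}.Finite)
    (a b : A) (h : Ideal.span ({a, b} : Set A) = ⊤) :
    ∃ c d : A, IsUnit (a * d - b * c) := by
  classical
  set Sfin : Finset (Ideal A) := hsemilocal.toFinset with hSfin
  have hSfin_mem : ∀ m : Ideal A, m ∈ Sfin ↔ m.IsMaximal := by
    intro m; simp [hSfin]
  set T : Finset (Ideal A) := Sfin.filter (fun m => a ∈ m) with hT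
  set S : Finset (Ideal A) := Sfin.filter (fun m => a ∉ m) with hS
  set J : Ideal A := S.inf id with hJ
  -- b ∉ m for m ∈ T
  have hb : ∀ m : Ideal A, m.IsMaximal → a ∈ m → b ∉ m := by
    intro m hm ham hbm
    have : Ideal.span ({a, b} : Set A) ≤ m := by
      rw [Ideal.span_le]
      intro x hx
      rcases hx with rfl | hx
      · exact ham
      · simp at hx; subst hx; exact hbm
    rw [h] at this
    exact hm.ne_top (top_le_iff.mp this)
  have hnot : ¬ ((J : Set A) ⊆ ⋃ m ∈ (↑T : Set (Ideal A)), ((id m : Ideal A) : Set A)) := by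
    intro hsub
    obtain ⟨m, hmT, hJm⟩ := (Ideal.subset_union_prime (s := T) (f := id) ⊥ ⊥
      (fun m hm _ _ => ((hSfin_mem m).mp (Finset.mem_filter.mp hm).1).isPrime)).mp hsub
    have hmmax : m.IsMaximal := (hSfin_mem m).mp (Finset.mem_filter.mp hmT).1
    have ham : a ∈ m := (Finset.mem_filter.mp hmT).2
    obtain ⟨m', hm'S, hle⟩ := (Ideal.IsPrime.inf_le' hmmax.isPrime).mp hJm
    have hm'max : m'.IsMaximal := (hSfin_mem m').mp (Finset.mem_filter.mp hm'S).1
    have ham' : a ∉ m' := (Finset.mem_filter.mp hm'S).2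
    have : m' = m := hm'max.eq_of_le hmmax.ne_top hle
    exact ham' (this ▸ ham)
  obtain ⟨t, htJ, htT⟩ := Set.not_subset.mp hnot
  simp only [Set.mem_iUnion, not_exists] at htT
  refine ⟨-t, 1, ?_⟩
  have key : IsUnit (a + t * b) := by
    by_contra hu
    obtain ⟨m, hmmax, hmem⟩ := exists_max_ideal_of_mem_nonunits (mem_nonunits_iff.mpr hu)
    by_cases ham : a ∈ m
    · have hmT : m ∈ T := Finset.mem_filter.mpr ⟨(hSfin_mem m).mpr hmmax, ham⟩
      have htb : t * b ∈ m := by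
        have := m.sub_mem hmem ham
        simpa using this
      rcases hmmax.isPrime.mem_or_mem htb with htm | hbm
      · exact htT m hmT htm
      · exact hb m hmmax ham hbm
    · have hmS : m ∈ S := Finset.mem_filter.mpr ⟨(hSfin_mem m).mpr hmmax, ham⟩
      have hJle : J ≤ m := Finset.inf_le (f := id) hmS
      have htm : t ∈ m := hJle htJ
      have : a ∈ m := by
        have := m.sub_mem hmem (m.mul_mem_right b htm)
        simpa using this
      exact ham this
  convert key using 1
  ring
end

section
/- Let A be a semilocal commutative ring. Every surjective A-linear map A² → A has kernel a free A-module of rank 1; consequently every rank-one projective quotient of A² is free. -/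
/-- Over a semilocal ring `A`, every surjective `A`-linear map `A² → A` has kernel a free
`A`-module of rank one. -/
theorem stmt_10 {A : Type*} [CommRing A]
    (hsemilocal : {I : Ideal A | I.IsMaximal}.Finite)
    (f : (Fin 2 → A) →ₗ[A] A) (hf : Function.Surjective f) :
    Nonempty (↥(LinearMap.ker f) ≃ₗ[A] A) := by
  set a := f (Pi.single 0 1) with ha
  set b := f (Pi.single 1 1) with hb
  have hfv : ∀ v : Fin 2 → A, f v = v 0 * a + v 1 * b := by
    intro v
    have hv : v = v 0 • (Pi.single 0 1 : Fin 2 → A) + v 1 • (Pi.single 1 1 : Fin 2 → A) := by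
      funext i
      fin_cases i <;> simp
    rw [ha, hb]
    conv_lhs => rw [hv]
    simp [mul_comm]
  obtain ⟨v, hv1⟩ := hf 1
  rw [hfv] at hv1
  set s := v 0
  set t := v 1
  -- the map c ↦ (c*b, -(c*a))
  let w : Fin 2 → A := ![b, -a]
  have hw : f w = 0 := by
    rw [hfv]; simp [w]; ring
  let φ : A →ₗ[A] (Fin 2 → A) := LinearMap.toSpanSingleton A _ w
  have hφ : ∀ c, φ c ∈ LinearMap.ker f := by
    intro c
    simp only [LinearMap.mem_ker, φ, LinearMap.toSpanSingleton_apply, map_smul, hw, smul_zero]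
  let ψ : A →ₗ[A] ↥(LinearMap.ker f) := φ.codRestrict _ hφ
  have hbij : Function.Bijective ψ := by
    constructor
    · intro c d h
      have h' : φ c = φ d := congrArg Subtype.val h
      have h0 : c • w 0 = d • w 0 := congrFun h' 0
      have h1 : c • w 1 = d • w 1 := congrFun h' 1
      simp only [w, Matrix.cons_val_zero, Matrix.cons_val_one, Matrix.head_cons,
        smul_eq_mul] at h0 h1
      have : c * (s * a + t * b) = d * (s * a + t * b) := by
        linear_combination t * h0 - s * h1
      simpa [hv1] using this
    · rintro ⟨x, hx⟩
      rw [LinearMap.mem_ker, hfv] at hx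
      refine ⟨t * x 0 - s * x 1, ?_⟩
      apply Subtype.ext
      show (t * x 0 - s * x 1) • w = x
      funext i
      fin_cases i <;> simp [w]
      · linear_combination (x 0) * hv1 - s * hx
      · linear_combination (x 1) * hv1 - t * hx
  exact ⟨(LinearEquiv.ofBijective ψ hbij).symm⟩
end

section
/- Let k be a field, m ≥ 0, and let φ be a k-algebra automorphism of k[x]/(x^{m+1}). Then there exists a k-algebra automorphism ψ of k[x]/(x^{m+2}) whose reduction modulo x^{m+1} equals φ. -/
/-!
Write `x` for the class of `X`. Lift `φ x` to some `y` in `k[X]/(X^(m+2))`; since `φ x` is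
nilpotent, `X` divides any representative of it, so `y ^ (m + 2) = 0` and `x ↦ y` defines an
endomorphism `ψ` of `k[X]/(X^(m+2))` reducing to `φ`. For `m ≥ 1`, `ψ` is surjective: its image
together with the square-zero ideal `(x^(m+1))` is everything, and writing `x = r + x^(m+1) b`
with `r` in the image gives `r^(m+1) = x^(m+1)`, which puts `x` itself in the image. A surjective
endomorphism of a finite module is bijective. For `m = 0`, `φ` is the identity and `ψ = id` works.
-/

open Polynomial

theorem mem_of_forall_exists_eq_add_pow_mul {S σ : Type*} [CommRing S] [SetLike σ S]
    [SubsemiringClass σ S] {R : σ} {x : S} {m : ℕ} (hm : m ≠ 0) (hx : x ^ (m + 2) = 0)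
    (h : ∀ s, ∃ r ∈ R, ∃ b, s = r + x ^ (m + 1) * b) : x ∈ R := by
  obtain ⟨r, hr, b, hxr⟩ := h x
  -- since `r = x (1 - x^m b)` and `x^(2m+1) = 0`
  have hr_pow : r ^ (m + 1) = x ^ (m + 1) := by
    obtain ⟨c, hc⟩ := sub_dvd_pow_sub_pow (1 - x ^ m * b) 1 (m + 1)
    have hx' : x ^ (2 * m + 1) = 0 := pow_eq_zero_of_le (by omega) hx
    calc r ^ (m + 1) = x ^ (m + 1) * (1 - x ^ m * b) ^ (m + 1) := by
          rw [← mul_pow]; congr 1; linear_combination -hxr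
      _ = x ^ (m + 1) - x ^ (2 * m + 1) * (b * c) := by
          rw [sub_eq_iff_eq_add'.mp hc]; ring
      _ = x ^ (m + 1) := by rw [hx', zero_mul, sub_zero]
  obtain ⟨r', hr', d, hbr⟩ := h b
  have hx_eq : x = r + r ^ (m + 1) * r' := by
    calc x = r + x ^ (m + 1) * (r' + x ^ (m + 1) * d) := by rw [← hbr]; exact hxr
      _ = r + r ^ (m + 1) * r' + x ^ (2 * m + 2) * d := by rw [hr_pow]; ring
      _ = r + r ^ (m + 1) * r' := by rw [pow_eq_zero_of_le (by omega) hx, zero_mul, add_zero]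
  rw [hx_eq]
  exact add_mem hr (mul_mem (pow_mem hr _) hr')

abbrev TruncatedPolynomial (k : Type*) [CommRing k] (n : ℕ) : Type _ :=
  k[X] ⧸ Ideal.span {(X : k[X]) ^ n}

noncomputable section

namespace TruncatedPolynomial

variable {k : Type*} [CommRing k]

abbrev reduce {n n' : ℕ} (h : n ≤ n') :
    TruncatedPolynomial k n' →ₐ[k] TruncatedPolynomial k n :=
  Ideal.Quotient.factorₐ k (Ideal.span_singleton_le_span_singleton.mpr (pow_dvd_pow X h))

abbrev root (n : ℕ) : TruncatedPolynomial k n := Ideal.Quotient.mk _ X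

theorem root_pow (n : ℕ) : (root n : TruncatedPolynomial k n) ^ n = 0 :=
  AdjoinRoot.mk_eq_zero.mpr dvd_rfl

theorem algHom_ext {n : ℕ} {A : Type*} [Semiring A] [Algebra k A]
    {f g : TruncatedPolynomial k n →ₐ[k] A} (h : f (root n) = g (root n)) : f = g :=
  AdjoinRoot.algHom_ext h

theorem adjoin_root {n : ℕ} :
    Algebra.adjoin k {root n} = (⊤ : Subalgebra k (TruncatedPolynomial k n)) :=
  AdjoinRoot.adjoinRoot_eq_top

instance (n : ℕ) : Module.Finite k (TruncatedPolynomial k n) :=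
  (AdjoinRoot.powerBasis' (monic_X_pow n)).finite

def lift {n : ℕ} {A : Type*} [CommRing A] [Algebra k A] (y : A) (hy : y ^ n = 0) :
    TruncatedPolynomial k n →ₐ[k] A :=
  AdjoinRoot.liftAlgHom (X ^ n) (Algebra.ofId k A) y (by simp [hy])

@[simp]
theorem lift_root {n : ℕ} {A : Type*} [CommRing A] [Algebra k A] (y : A) (hy : y ^ n = 0) :
    lift (k := k) y hy (root n) = y :=
  AdjoinRoot.liftAlgHom_root _ _ _ _

theorem reduce_surjective {n n' : ℕ} (h : n ≤ n') :
    Function.Surjective (reduce (k := k) h) :=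
  Ideal.Quotient.factor_surjective (Ideal.span_singleton_le_span_singleton.mpr (pow_dvd_pow X h))

theorem exists_eq_add_root_pow_mul_of_reduce_eq {n n' : ℕ} (h : n ≤ n')
    {s t : TruncatedPolynomial k n'} (hst : reduce h s = reduce h t) :
    ∃ b, s = t + root n' ^ n * b := by
  obtain ⟨p, rfl⟩ := Ideal.Quotient.mk_surjective s
  obtain ⟨q, rfl⟩ := Ideal.Quotient.mk_surjective t
  obtain ⟨c, hc⟩ := AdjoinRoot.mk_eq_mk.mp hst
  refine ⟨Ideal.Quotient.mk _ c, ?_⟩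
  rw [← map_pow, ← map_mul, ← hc, map_sub, add_sub_cancel]

theorem exists_lift_of_pow_eq_zero [IsDomain k] {n n' : ℕ} (hn : n ≠ 0) (h : n ≤ n')
    {a : TruncatedPolynomial k n} (ha : a ^ n = 0) :
    ∃ y : TruncatedPolynomial k n', reduce h y = a ∧ y ^ n' = 0 := by
  obtain ⟨p, rfl⟩ := Ideal.Quotient.mk_surjective a
  have hXp : X ∣ p := by
    rw [← map_pow] at ha
    exact prime_X.dvd_of_dvd_pow ((dvd_pow_self X hn).trans (AdjoinRoot.mk_eq_zero.mp ha))
  exact ⟨Ideal.Quotient.mk _ p, rfl, by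
    rw [← map_pow]; exact AdjoinRoot.mk_eq_zero.mpr (pow_dvd_pow_of_dvd hXp n')⟩

theorem exists_lift_algHom [IsDomain k] {n n' : ℕ} (hn : n ≠ 0) (h : n ≤ n')
    (φ : TruncatedPolynomial k n →ₐ[k] TruncatedPolynomial k n) :
    ∃ ψ : TruncatedPolynomial k n' →ₐ[k] TruncatedPolynomial k n',
      (reduce h).comp ψ = φ.comp (reduce h) := by
  have hφ : φ (root n) ^ n = 0 := by rw [← map_pow, root_pow, map_zero]
  obtain ⟨y, hy, hyn⟩ := exists_lift_of_pow_eq_zero hn h hφ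
  exact ⟨lift y hyn, algHom_ext (by simp [hy])⟩

theorem algHom_one_eq_id (φ : TruncatedPolynomial k 1 →ₐ[k] TruncatedPolynomial k 1) :
    φ = AlgHom.id k _ :=
  algHom_ext (by rw [← pow_one (root 1), root_pow, map_zero, AlgHom.id_apply])

theorem surjective_of_surjective_reduce_comp {m : ℕ} (hm : m ≠ 0)
    (ψ : TruncatedPolynomial k (m + 2) →ₐ[k] TruncatedPolynomial k (m + 2))
    (h : Function.Surjective ((reduce (Nat.le_succ (m + 1))).comp ψ)) :
    Function.Surjective ψ := by
  have hroot : root (m + 2) ∈ ψ.range := by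
    refine mem_of_forall_exists_eq_add_pow_mul hm (root_pow _) fun s => ?_
    obtain ⟨t, ht⟩ := h (reduce (Nat.le_succ (m + 1)) s)
    obtain ⟨b, hb⟩ := exists_eq_add_root_pow_mul_of_reduce_eq _ ht.symm
    exact ⟨ψ t, ⟨t, rfl⟩, b, hb⟩
  rw [← AlgHom.range_eq_top, eq_top_iff, ← adjoin_root]
  exact Algebra.adjoin_le (Set.singleton_subset_iff.mpr hroot)

end TruncatedPolynomial

end

open TruncatedPolynomial in
/-- Every `k`-algebra automorphism of `k[x]/(x^(m+1))` lifts to a `k`-algebra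
automorphism of `k[x]/(x^(m+2))` along the canonical reduction map. -/
theorem stmt_11 {k : Type*} [Field k] (m : ℕ)
    (φ : (k[X] ⧸ Ideal.span {(X : k[X]) ^ (m + 1)}) ≃ₐ[k]
         (k[X] ⧸ Ideal.span {(X : k[X]) ^ (m + 1)})) :
    ∃ ψ : (k[X] ⧸ Ideal.span {(X : k[X]) ^ (m + 2)}) ≃ₐ[k]
          (k[X] ⧸ Ideal.span {(X : k[X]) ^ (m + 2)}),
      ∀ f : k[X] ⧸ Ideal.span {(X : k[X]) ^ (m + 2)},
        Ideal.Quotient.factor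
            (Ideal.span_singleton_le_span_singleton.mpr
              (pow_dvd_pow (X : k[X]) (by omega))) (ψ f) =
          φ (Ideal.Quotient.factor
            (Ideal.span_singleton_le_span_singleton.mpr
              (pow_dvd_pow (X : k[X]) (by omega))) f) := by
  cases m with
  | zero =>
    exact ⟨AlgEquiv.refl, fun f => (DFunLike.congr_fun (algHom_one_eq_id φ.toAlgHom) _).symm⟩
  | succ m =>
    obtain ⟨ψ, hψ⟩ := exists_lift_algHom (n' := m + 1 + 2) (by omega) (by omega) φ.toAlgHom
    have hψ_surj : Function.Surjective ψ := by
      refine surjective_of_surjective_reduce_comp m.succ_ne_zero ψ ?_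
      rw [hψ]
      exact φ.surjective.comp (reduce_surjective (by omega))
    exact ⟨AlgEquiv.ofBijective ψ
      (OrzechProperty.bijective_of_surjective_endomorphism ψ.toLinearMap hψ_surj),
      DFunLike.congr_fun hψ⟩
end

section
/- Let A be an integral domain that is a finitely generated ℤ-algebra. If A is a field, then A is finite. -/
theorem int_isJacobsonRing : IsJacobsonRing ℤ := by
  rw [isJacobsonRing_iff_prime_eq]
  intro P hP
  by_cases hbot : P = ⊥
  · subst hbot
    refine le_antisymm ?_ Ideal.le_jacobson
    intro x hx
    rw [Ideal.mem_jacobson_bot] at hx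
    have h1 := hx 1
    have h2 := hx (-1)
    rw [Int.isUnit_iff] at h1 h2
    simp only [Submodule.mem_bot]
    omega
  · exact Ideal.jacobson_eq_self_of_isMaximal (H := hP.isMaximal hbot)

/-- An integral domain that is a finitely generated `ℤ`-algebra and a field is finite. -/
theorem stmt_13 (A : Type*) [CommRing A] [IsDomain A] [Algebra.FiniteType ℤ A]
    (h : IsField A) : Finite A := by
  letI : Field A := h.toField
  haveI : IsJacobsonRing ℤ := int_isJacobsonRing
  have hM : Module.Finite ℤ A := finite_of_finite_type_of_isJacobsonRing ℤ A
  have hInt : Algebra.IsIntegral ℤ A := Algebra.IsIntegral.of_finite ℤ A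
  obtain ⟨p, hp⟩ := CharP.exists A
  rcases CharP.char_is_prime_or_zero A p with hprime | hzero
  · haveI : Fact p.Prime := ⟨hprime⟩
    letI : Algebra (ZMod p) A := ZMod.algebra A p
    haveI : Module.Finite (ZMod p) A :=
      Module.Finite.of_restrictScalars_finite ℤ (ZMod p) A
    exact Module.finite_of_finite (ZMod p)
  · subst hzero
    haveI : CharZero A := CharP.charP_to_charZero A
    have hinj : Function.Injective (algebraMap ℤ A) := by
      rw [algebraMap_int_eq]
      exact fun a b hab => by simpa using hab
    have : IsField ℤ := isField_of_isIntegral_of_isField hinj h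
    exact absurd this Int.not_isField
end

section
/- Let A be an integral domain that is a finitely generated ℤ-algebra and is not a field. Then A has infinitely many maximal ideals. -/
instance : IsJacobsonRing ℤ := by
  rw [isJacobsonRing_iff_prime_eq]
  intro P hP
  by_cases hbot : P = ⊥
  · subst hbot
    refine le_antisymm (fun x hx => ?_) Ideal.le_jacobson
    rw [Ideal.mem_bot]
    by_contra hx0
    obtain ⟨p, hple, hpprime⟩ := Nat.exists_infinite_primes (x.natAbs + 1)
    have hirr : Irreducible ((p : ℤ)) := (Nat.prime_iff_prime_int.mp hpprime).irreducible
    have hmax : (Ideal.span {(p : ℤ)}).IsMaximal :=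
      PrincipalIdealRing.isMaximal_of_irreducible hirr
    rw [Ideal.jacobson, Ideal.mem_sInf] at hx
    have := hx (I := Ideal.span {(p : ℤ)}) ⟨bot_le, hmax⟩
    rw [Ideal.mem_span_singleton] at this
    have hdvd : p ∣ x.natAbs := by simpa using Int.natAbs_dvd_natAbs.mpr this
    have := Nat.le_of_dvd (Int.natAbs_pos.mpr hx0) hdvd
    omega
  · have hmax : P.IsMaximal := IsPrime.to_maximal_ideal hbot
    exact le_antisymm (sInf_le ⟨le_refl P, hmax⟩) Ideal.le_jacobson

/-- An integral domain that is a finitely generated `ℤ`-algebra and not a field has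
infinitely many maximal ideals. -/
theorem stmt_14 (A : Type*) [CommRing A] [IsDomain A] [Algebra.FiniteType ℤ A]
    (h : ¬ IsField A) : {I : Ideal A | I.IsMaximal}.Infinite := by
  intro hfin
  have : IsJacobsonRing A := isJacobsonRing_of_finiteType (A := ℤ)
  -- A is a Jacobson ring
  have hjac : (⊥ : Ideal A).jacobson = ⊥ := by
    have := (Ideal.radical_eq_jacobson (⊥ : Ideal A)).symm
    rwa [Ideal.radical_bot_of_noZeroDivisors] at this
  -- pick a nonzero element in each maximal ideal
  have hx : ∀ I ∈ hfin.toFinset, ∃ x : A, x ∈ I ∧ x ≠ 0 := by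
    intro I hI
    have hImax : I.IsMaximal := by simpa using hfin.mem_toFinset.mp hI
    have hIne : I ≠ ⊥ := Ring.ne_bot_of_isMaximal_of_not_isField hImax h
    obtain ⟨x, hx, hx0⟩ := Submodule.exists_mem_ne_zero_of_ne_bot hIne
    exact ⟨x, hx, hx0⟩
  choose f hf hf0 using hx
  set p : A := ∏ I ∈ hfin.toFinset.attach, f I I.2 with hp
  have hpne : p ≠ 0 := Finset.prod_ne_zero_iff.mpr fun I _ => hf0 I I.2
  have hpmem : p ∈ (⊥ : Ideal A).jacobson := by
    rw [Ideal.jacobson, Ideal.mem_sInf]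
    rintro J ⟨-, hJmax⟩
    have hJ : J ∈ hfin.toFinset := hfin.mem_toFinset.mpr hJmax
    have : f J hJ ∣ p := Finset.dvd_prod_of_mem _ (Finset.mem_attach _ ⟨J, hJ⟩)
    obtain ⟨c, hc⟩ := this
    rw [hc]
    exact J.mul_mem_right c (hf J hJ)
  rw [hjac] at hpmem
  exact hpne (Ideal.mem_bot.mp hpmem)
end

section
/- Let k be an infinite field, let B be a finite-dimensional k-algebra generated by one element as a k-algebra, and let V ⊆ A¹_k be a nonempty open subscheme. Then there exists a closed immersion of Spec B into V over k. -/
/-!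
Choose a basic open `D(g) ⊆ V` with `g ≠ 0`. Since `k` is infinite, some translate
`f(t + r)` is coprime to `g`: a common root `a` in an algebraic closure would make `r` a
difference of a root of `f` and a root of `g`, and there are only finitely many of those.
The substitution `t ↦ t - r` then presents `k[t]/(f)` as `k[t]/(f(t + r))`, whose spectrum,
the zero locus of `f(t + r)`, lies in `D(g)`, hence in `V`.
-/

open AlgebraicGeometry CategoryTheory Polynomial

universe u

theorem Polynomial.exists_isCoprime_taylor {k : Type*} [Field k] [Infinite k] {f g : k[X]}
    (hf : f ≠ 0) (hg : g ≠ 0) : ∃ r : k, IsCoprime (taylor r f) g := by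
  classical
  let K := AlgebraicClosure k
  let bad : Finset K := Finset.image₂ (· - ·) (f.aroots K).toFinset (g.aroots K).toFinset
  have hbad : (algebraMap k K ⁻¹' bad).Finite :=
    bad.finite_toSet.preimage (algebraMap k K).injective.injOn
  obtain ⟨r, hr⟩ := hbad.infinite_compl.nonempty
  refine ⟨r, (isCoprime_iff_aeval_ne_zero_of_isAlgClosed k K _ _).mpr fun a => ?_⟩
  rw [or_iff_not_and_not]
  rintro ⟨hfa, hga⟩
  have hfa : aeval (a + algebraMap k K r) f = 0 := by simpa [taylor_apply, aeval_comp] using hfa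
  exact hr (Finset.mem_image₂.mpr ⟨_, by simp_all, a, by simp_all, add_sub_cancel_left a _⟩)

theorem Polynomial.ker_mkₐ_comp_taylorEquiv {R : Type*} [CommRing R] (r : R) (f : R[X]) :
    RingHom.ker ((Ideal.Quotient.mkₐ R (Ideal.span {f})).comp (taylorEquiv r).toAlgHom) =
      Ideal.span {taylor (-r) f} := by
  ext p
  rw [RingHom.mem_ker, Ideal.mem_span_singleton, ← map_dvd_iff (taylorEquiv r)]
  change Ideal.Quotient.mk _ (taylor r p) = 0 ↔ taylor r (taylor (-r) f) ∣ taylor r p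
  rw [Ideal.Quotient.eq_zero_iff_mem, Ideal.mem_span_singleton, taylor_taylor, add_neg_cancel,
    taylor_zero]

theorem PrimeSpectrum.zeroLocus_singleton_subset_basicOpen {R : Type*} [CommSemiring R]
    {a b : R} (h : IsCoprime a b) : zeroLocus {a} ⊆ basicOpen b := by
  intro p hp hb
  obtain ⟨u, v, huv⟩ := h
  refine p.isPrime.ne_top ((Ideal.eq_top_iff_one _).mpr ?_)
  rw [← huv]
  exact add_mem (Ideal.mul_mem_left _ _ (hp rfl)) (Ideal.mul_mem_left _ _ hb)

theorem PrimeSpectrum.exists_ne_zero_basicOpen_le {R : Type*} [CommSemiring R]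
    {U : TopologicalSpace.Opens (PrimeSpectrum R)} (hU : U ≠ ⊥) :
    ∃ g : R, g ≠ 0 ∧ basicOpen g ≤ U := by
  obtain ⟨x, hx⟩ := (TopologicalSpace.Opens.ne_bot_iff_nonempty U).mp hU
  obtain ⟨_, ⟨g, rfl⟩, hxg, hgU⟩ :=
    isTopologicalBasis_basic_opens.exists_subset_of_mem_open hx U.isOpen
  refine ⟨g, ?_, hgU⟩
  rintro rfl
  simp at hxg

theorem AlgebraicGeometry.IsOpenImmersion.isClosedImmersion_lift {X Y U : Scheme} (f : U ⟶ Y)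
    [IsOpenImmersion f] (g : X ⟶ Y) [IsClosedImmersion g] (H : Set.range g ⊆ Set.range f) :
    IsClosedImmersion (IsOpenImmersion.lift f g H) := by
  have : IsClosedImmersion (IsOpenImmersion.lift f g H ≫ f) := by
    rwa [IsOpenImmersion.lift_fac]
  exact .of_comp _ f

theorem AlgebraicGeometry.exists_isClosedImmersion_of_zeroLocus_ker_subset {R A B : Type u}
    [CommRing R] [CommRing A] [CommRing B] [Algebra R A] [Algebra R B] (ψ : A →ₐ[R] B)
    (hψ : Function.Surjective ψ) (U : (Spec (.of A)).Opens)
    (hU : PrimeSpectrum.zeroLocus (RingHom.ker ψ : Set A) ⊆ (U : Set (Spec (.of A)))) :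
    ∃ ι : Spec (.of B) ⟶ U.toScheme, IsClosedImmersion ι ∧
      ι ≫ U.ι ≫ Spec.map (CommRingCat.ofHom (algebraMap R A)) =
        Spec.map (CommRingCat.ofHom (algebraMap R B)) := by
  let i := Spec.map (CommRingCat.ofHom (ψ : A →+* B))
  have : IsClosedImmersion i := .spec_of_surjective _ hψ
  have hi : Set.range i ⊆ Set.range U.ι := by
    rw [Scheme.Opens.range_ι]
    exact (range_comap_of_surjective _ _ hψ).trans_subset hU
  refine ⟨IsOpenImmersion.lift U.ι i hi, IsOpenImmersion.isClosedImmersion_lift _ _ hi, ?_⟩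
  rw [IsOpenImmersion.lift_fac_assoc, ← Spec.map_comp, ← CommRingCat.ofHom_comp,
    AlgHom.comp_algebraMap]

/-- Over an infinite field `k`, any finite `k`-scheme `Spec (k[t]/(f))` (with `f ≠ 0`)
admits a closed immersion over `k` into any nonempty open subscheme `V` of the affine
line `𝔸¹_k = Spec k[t]`. -/
theorem stmt_19 (k : Type) [Field k] (hk : Infinite k) (f : k[X]) (hf : f ≠ 0)
    (V : (Spec (CommRingCat.of k[X])).Opens) (hV : V ≠ ⊥) :
    ∃ ι : Spec (CommRingCat.of (k[X] ⧸ Ideal.span {f})) ⟶ V.toScheme,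
      IsClosedImmersion ι ∧
      ι ≫ V.ι ≫ Spec.map (CommRingCat.ofHom (algebraMap k k[X])) =
        Spec.map (CommRingCat.ofHom (algebraMap k (k[X] ⧸ Ideal.span {f}))) := by
  obtain ⟨g, hg, hgV⟩ := PrimeSpectrum.exists_ne_zero_basicOpen_le hV
  obtain ⟨r, hr⟩ := exists_isCoprime_taylor hf hg
  refine exists_isClosedImmersion_of_zeroLocus_ker_subset
    ((Ideal.Quotient.mkₐ k _).comp (taylorEquiv (-r)).toAlgHom)
    ((Ideal.Quotient.mkₐ_surjective k _).comp (taylorEquiv (-r)).surjective) V ?_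
  rw [ker_mkₐ_comp_taylorEquiv, neg_neg, PrimeSpectrum.zeroLocus_span]
  exact (PrimeSpectrum.zeroLocus_singleton_subset_basicOpen hr).trans hgV
end
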